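/- arXiv:1908.09264 — 2 statements merged into one kernel-verified Lean document; each statement's English description precedes it below -/
import Mathlib

section
/- Let (Ω, 𝓕, P) be a probability space, H ∈ (0,1), σ > 0, and let B : ℝ × Ω → ℝ be jointly measurable with E[B(t,·)B(s,·)] = (σ²/2)(|t|^{2H} + |s|^{2H} − |t−s|^{2H}) for all t, s ∈ ℝ. Let ψ : ℝ → ℝ be continuous with compact support, fix j, k ∈ ℝ, and define c_j(ω) = 2^{j} ∫ B(t,ω) ψ(2^{j}t − k) dt and c_{j−1}(ω) = 2^{j−1} ∫ B(t,ω) ψ(2^{j−1}t − k) dt. Assume the functions (t,s,ω) ↦ B(t,ω)B(s,ω)ψ(2^{j}t−k)ψ(2^{j}s−k) and (t,s,ω) ↦ B(t,ω)B(s,ω)ψ(2^{j−1}t−k)ψ(2^{j−1}s−k) are integrable on ℝ × ℝ × Ω. Then E[c_{j−1}²] = 2^{2H} E[c_j²]. -/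
open Real MeasureTheory

/-!
Expanding the square and applying Fubini, `E[c_j²] = 4^j ∫∫ R(t,s) ψ(2^j t − k) ψ(2^j s − k) dt ds`,
where `R` is the covariance of `B`. The fBm covariance is homogeneous of degree `2H`, so the
substitution `(t, s) ↦ (2t, 2s)` in the double integral at level `j − 1` produces the factor
`2^{2H}` from the covariance and `4` from the Jacobian, which the prefactor `4^{j−1}` absorbs.
-/

noncomputable def fbmCovariance (H σ t s : ℝ) : ℝ :=
  σ ^ 2 / 2 * (|t| ^ (2 * H) + |s| ^ (2 * H) - |t - s| ^ (2 * H))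

theorem fbmCovariance_mul_mul {c : ℝ} (hc : 0 ≤ c) (H σ t s : ℝ) :
    fbmCovariance H σ (c * t) (c * s) = c ^ (2 * H) * fbmCovariance H σ t s := by
  have habs : ∀ x : ℝ, |c * x| ^ (2 * H) = c ^ (2 * H) * |x| ^ (2 * H) := fun x => by
    rw [abs_mul, abs_of_nonneg hc, mul_rpow hc (abs_nonneg x)]
  simp only [fbmCovariance, ← mul_sub, habs]
  ring

theorem integral_sq_integral_eq_integral_covariance {α Ω : Type*} [MeasurableSpace α]
    [MeasurableSpace Ω] {μ : Measure α} [SFinite μ] {P : Measure Ω} [SFinite P]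
    (X : α × Ω → ℝ) (w : α → ℝ)
    (hint : Integrable
      (fun q : (α × α) × Ω => X (q.1.1, q.2) * X (q.1.2, q.2) * w q.1.1 * w q.1.2)
      ((μ.prod μ).prod P)) :
    ∫ ω, (∫ t, X (t, ω) * w t ∂μ) ^ 2 ∂P =
      ∫ q, (∫ ω, X (q.1, ω) * X (q.2, ω) ∂P) * w q.1 * w q.2 ∂(μ.prod μ) := by
  have hsq : ∀ ω, (∫ t, X (t, ω) * w t ∂μ) ^ 2 =
      ∫ q, X (q.1, ω) * X (q.2, ω) * w q.1 * w q.2 ∂(μ.prod μ) := fun ω => by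
    rw [sq, ← integral_prod_mul]
    congr 1 with q
    ring
  simp_rw [hsq]
  rw [integral_integral_swap
    (f := fun (ω : Ω) (q : α × α) => X (q.1, ω) * X (q.2, ω) * w q.1 * w q.2) hint.swap]
  congr 1 with q
  rw [integral_mul_const, integral_mul_const]

theorem integral_fbmCovariance_mul_eq_integral_comp_mul (H σ : ℝ) (φ : ℝ → ℝ) {c : ℝ}
    (hc : 0 < c) :
    ∫ q : ℝ × ℝ, fbmCovariance H σ q.1 q.2 * φ q.1 * φ q.2 =
      c ^ (2 * H) * c ^ 2 *
        ∫ q : ℝ × ℝ, fbmCovariance H σ q.1 q.2 * φ (c * q.1) * φ (c * q.2) := by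
  calc ∫ q : ℝ × ℝ, fbmCovariance H σ q.1 q.2 * φ q.1 * φ q.2
      = c ^ 2 * ∫ q : ℝ × ℝ,
          fbmCovariance H σ (c * q.1) (c * q.2) * φ (c * q.1) * φ (c * q.2) := by
        have hsub := Measure.integral_comp_smul_of_nonneg volume
          (fun q : ℝ × ℝ => fbmCovariance H σ q.1 q.2 * φ q.1 * φ q.2) c (hR := hc.le)
        simp only [Prod.smul_fst, Prod.smul_snd, smul_eq_mul] at hsub
        rw [hsub]
        simp [hc.ne']
    _ = _ := by
        simp only [fbmCovariance_mul_mul hc.le, ← integral_const_mul]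
        congr 1 with q
        ring

theorem fbm_wavelet_coeff_variance_scaling_general
    {Ω : Type*} [MeasureSpace Ω] (P : Measure Ω) [IsProbabilityMeasure P]
    (H σ : ℝ)
    (B : ℝ × Ω → ℝ)
    (hcov : ∀ t s : ℝ, ∫ ω, B (t, ω) * B (s, ω) ∂P =
      (σ ^ 2 / 2) * (|t| ^ (2 * H) + |s| ^ (2 * H) - |t - s| ^ (2 * H)))
    (ψ : ℝ → ℝ) (j k : ℝ)
    (hint_j : Integrable
      (fun q : (ℝ × ℝ) × Ω =>
        B (q.1.1, q.2) * B (q.1.2, q.2) *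
          ψ ((2 : ℝ) ^ j * q.1.1 - k) * ψ ((2 : ℝ) ^ j * q.1.2 - k))
      ((volume : Measure (ℝ × ℝ)).prod P))
    (hint_jm1 : Integrable
      (fun q : (ℝ × ℝ) × Ω =>
        B (q.1.1, q.2) * B (q.1.2, q.2) *
          ψ ((2 : ℝ) ^ (j - 1) * q.1.1 - k) * ψ ((2 : ℝ) ^ (j - 1) * q.1.2 - k))
      ((volume : Measure (ℝ × ℝ)).prod P)) :
    ∫ ω, ((2 : ℝ) ^ (j - 1) * ∫ t : ℝ, B (t, ω) * ψ ((2 : ℝ) ^ (j - 1) * t - k)) ^ 2 ∂P =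
      (2 : ℝ) ^ (2 * H) *
        ∫ ω, ((2 : ℝ) ^ j * ∫ t : ℝ, B (t, ω) * ψ ((2 : ℝ) ^ j * t - k)) ^ 2 ∂P := by
  have hcov' : ∀ t s, ∫ ω, B (t, ω) * B (s, ω) ∂P = fbmCovariance H σ t s := hcov
  have hj : (2 : ℝ) ^ j = 2 * 2 ^ (j - 1) := by
    conv_lhs => rw [← sub_add_cancel j 1]
    rw [rpow_add two_pos, rpow_one, mul_comm]
  have hdilate : ∀ t, ψ ((2 : ℝ) ^ (j - 1) * (2 * t) - k) = ψ ((2 : ℝ) ^ j * t - k) := fun t => by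
    rw [hj]
    congr 1
    ring
  simp_rw [mul_pow, integral_const_mul]
  rw [integral_sq_integral_eq_integral_covariance B (fun t => ψ (2 ^ (j - 1) * t - k)) hint_jm1,
    integral_sq_integral_eq_integral_covariance B (fun t => ψ (2 ^ j * t - k)) hint_j]
  simp only [hcov', ← Measure.volume_eq_prod]
  rw [integral_fbmCovariance_mul_eq_integral_comp_mul H σ
    (fun t => ψ (2 ^ (j - 1) * t - k)) two_pos]
  simp only [hdilate, hj]
  ring

/-- Variance scaling of fBm wavelet coefficients (Proposition 1, variance form):
if `B` has the fBm covariance `E[B(t)B(s)] = (σ²/2)(|t|^{2H}+|s|^{2H}−|t−s|^{2H})`, then the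
wavelet coefficients `c_j = 2^j ∫ B(t,·) ψ(2^j t − k) dt` satisfy
`E[c_{j−1}²] = 2^{2H} E[c_j²]`. -/
theorem fbm_wavelet_coeff_variance_scaling
    {Ω : Type*} [MeasureSpace Ω] (P : Measure Ω) [IsProbabilityMeasure P]
    (H σ : ℝ) (hH : H ∈ Set.Ioo (0 : ℝ) 1) (hσ : 0 < σ)
    (B : ℝ × Ω → ℝ) (hB : Measurable B)
    (hcov : ∀ t s : ℝ, ∫ ω, B (t, ω) * B (s, ω) ∂P =
      (σ ^ 2 / 2) * (|t| ^ (2 * H) + |s| ^ (2 * H) - |t - s| ^ (2 * H)))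
    (ψ : ℝ → ℝ) (hψc : Continuous ψ) (hψs : HasCompactSupport ψ) (j k : ℝ)
    (hint_j : Integrable
      (fun q : (ℝ × ℝ) × Ω =>
        B (q.1.1, q.2) * B (q.1.2, q.2) *
          ψ ((2 : ℝ) ^ j * q.1.1 - k) * ψ ((2 : ℝ) ^ j * q.1.2 - k))
      ((volume : Measure (ℝ × ℝ)).prod P))
    (hint_jm1 : Integrable
      (fun q : (ℝ × ℝ) × Ω =>
        B (q.1.1, q.2) * B (q.1.2, q.2) *
          ψ ((2 : ℝ) ^ (j - 1) * q.1.1 - k) * ψ ((2 : ℝ) ^ (j - 1) * q.1.2 - k))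
      ((volume : Measure (ℝ × ℝ)).prod P)) :
    ∫ ω, ((2 : ℝ) ^ (j - 1) * ∫ t : ℝ, B (t, ω) * ψ ((2 : ℝ) ^ (j - 1) * t - k)) ^ 2 ∂P =
      (2 : ℝ) ^ (2 * H) *
        ∫ ω, ((2 : ℝ) ^ j * ∫ t : ℝ, B (t, ω) * ψ ((2 : ℝ) ^ j * t - k)) ^ 2 ∂P :=
  fbm_wavelet_coeff_variance_scaling_general P H σ B hcov ψ j k hint_j hint_jm1
end

section
/- Let σ₂ > 0 and 0 ≤ ε ≤ σ₂/2, and let σ₁ satisfy σ₂ − ε ≤ σ₁ ≤ σ₂ + ε. Then the Kullback–Leibler divergence between the centered Gaussian measures N(0, σ₁²) and N(0, σ₂²) on ℝ satisfies D_KL(N(0,σ₁²) ‖ N(0,σ₂²)) ≤ 3ε/σ₂. -/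
/-!
The log-likelihood ratio of two Gaussian laws is a quadratic polynomial, so its mean under
`N(μ₁, v₁)` only involves the first two moments:
`D = (log (v₂ / v₁) + (v₁ + (μ₁ - μ₂)²) / v₂ - 1) / 2`.
For centered laws with standard deviations `σ₁, σ₂`, the bound `log t ≤ t - 1` at `t = σ₂ / σ₁`
gives `D ≤ (σ₁ - σ₂)² (σ₁ + 2σ₂) / (2 σ₁ σ₂²)`, which is even `O(ε² / σ₂²)` once
`|σ₁ - σ₂| ≤ ε ≤ σ₂ / 2`.
-/

open MeasureTheory ProbabilityTheory Real
open scoped NNReal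

namespace ProbabilityTheory

lemma log_gaussianPDFReal (μ : ℝ) {v : ℝ≥0} (hv : v ≠ 0) (x : ℝ) :
    log (gaussianPDFReal μ v x) = -log (2 * π * v) / 2 - (x - μ) ^ 2 / (2 * v) := by
  have hv' : (0 : ℝ) < v := by positivity
  rw [gaussianPDFReal, log_mul (by positivity) (exp_ne_zero _), log_inv,
    log_sqrt (by positivity), log_exp]
  ring

lemma rnDeriv_gaussianReal_gaussianReal (μ₁ μ₂ : ℝ) {v₁ v₂ : ℝ≥0} (hv₁ : v₁ ≠ 0)
    (hv₂ : v₂ ≠ 0) :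
    ∂(gaussianReal μ₁ v₁)/∂(gaussianReal μ₂ v₂) =ₐₛ
      fun x ↦ gaussianPDF μ₁ v₁ x / gaussianPDF μ₂ v₂ x := by
  have h := Measure.rnDeriv_eq_div (gaussianReal_absolutelyContinuous μ₁ hv₁)
    (gaussianReal_absolutelyContinuous μ₂ hv₂)
  filter_upwards [gaussianReal_absolutelyContinuous' μ₂ hv₂ h, rnDeriv_gaussianReal μ₁ v₁,
    rnDeriv_gaussianReal μ₂ v₂] with x hx h₁ h₂
  rw [hx, h₁, h₂]

lemma llr_gaussianReal (μ₁ μ₂ : ℝ) {v₁ v₂ : ℝ≥0} (hv₁ : v₁ ≠ 0) (hv₂ : v₂ ≠ 0) :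
    llr (gaussianReal μ₁ v₁) (gaussianReal μ₂ v₂) =ₐₛ
      fun x ↦ log (v₂ / v₁) / 2 + (x - μ₂) ^ 2 / (2 * v₂) - (x - μ₁) ^ 2 / (2 * v₁) := by
  filter_upwards [rnDeriv_gaussianReal_gaussianReal μ₁ μ₂ hv₁ hv₂] with x hx
  have hv₁' : (0 : ℝ) < v₁ := by positivity
  have hv₂' : (0 : ℝ) < v₂ := by positivity
  rw [llr, hx, gaussianPDF, gaussianPDF, ENNReal.toReal_div,
    ENNReal.toReal_ofReal (gaussianPDFReal_nonneg _ _ _),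
    ENNReal.toReal_ofReal (gaussianPDFReal_nonneg _ _ _),
    log_div (gaussianPDFReal_pos _ _ _ hv₁).ne' (gaussianPDFReal_pos _ _ _ hv₂).ne',
    log_gaussianPDFReal μ₁ hv₁, log_gaussianPDFReal μ₂ hv₂,
    log_div hv₂'.ne' hv₁'.ne', log_mul (by positivity) hv₁'.ne',
    log_mul (by positivity) hv₂'.ne']
  ring

lemma integral_sub_sq_gaussianReal (μ : ℝ) (v : ℝ≥0) (c : ℝ) :
    ∫ x, (x - c) ^ 2 ∂gaussianReal μ v = v + (μ - c) ^ 2 := by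
  have hL2 : MemLp (fun x ↦ x - c) 2 (gaussianReal μ v) :=
    (memLp_id_gaussianReal 2).sub (memLp_const c)
  have hvar := variance_eq_sub hL2
  have hint : Integrable (fun x ↦ x) (gaussianReal μ v) :=
    (memLp_id_gaussianReal 2).integrable one_le_two
  rw [variance_sub_const measurable_id'.aestronglyMeasurable, variance_fun_id_gaussianReal,
    integral_sub hint (integrable_const c), integral_id_gaussianReal, integral_const] at hvar
  simp only [Pi.pow_apply, probReal_univ, smul_eq_mul, one_mul] at hvar
  linarith

lemma integral_llr_gaussianReal (μ₁ μ₂ : ℝ) {v₁ v₂ : ℝ≥0} (hv₁ : v₁ ≠ 0) (hv₂ : v₂ ≠ 0) :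
    ∫ x, llr (gaussianReal μ₁ v₁) (gaussianReal μ₂ v₂) x ∂gaussianReal μ₁ v₁
      = (log (v₂ / v₁) + (v₁ + (μ₁ - μ₂) ^ 2) / v₂ - 1) / 2 := by
  have hsq (c a : ℝ) : Integrable (fun x ↦ (x - c) ^ 2 / a) (gaussianReal μ₁ v₁) :=
    ((memLp_id_gaussianReal 2).sub (memLp_const c)).integrable_sq.div_const a
  have hv₁' : (0 : ℝ) < v₁ := by positivity
  rw [integral_congr_ae
      (gaussianReal_absolutelyContinuous μ₁ hv₁ (llr_gaussianReal μ₁ μ₂ hv₁ hv₂)),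
    integral_sub ((integrable_const _).fun_add (hsq _ _)) (hsq _ _),
    integral_add (integrable_const _) (hsq _ _)]
  simp only [integral_div, integral_sub_sq_gaussianReal, integral_const, probReal_univ, one_smul,
    sub_self, ne_eq, OfNat.ofNat_ne_zero, not_false_eq_true, zero_pow, add_zero]
  field_simp

end ProbabilityTheory

lemma log_sq_div_sq_add_sq_div_sq_sub_one_le {σ₁ σ₂ ε : ℝ} (hσ₂ : 0 < σ₂) (hε : ε ≤ σ₂ / 2)
    (hlo : σ₂ - ε ≤ σ₁) (hhi : σ₁ ≤ σ₂ + ε) :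
    (log (σ₂ ^ 2 / σ₁ ^ 2) + σ₁ ^ 2 / σ₂ ^ 2 - 1) / 2 ≤ 3 * ε / σ₂ := by
  have hσ₁ : 0 < σ₁ := by linarith
  have hlog : log (σ₂ ^ 2 / σ₁ ^ 2) ≤ 2 * (σ₂ / σ₁ - 1) := by
    rw [← div_pow, log_pow]
    push_cast
    linarith [log_le_sub_one_of_pos (div_pos hσ₂ hσ₁)]
  have hcubic : 2 * (σ₂ / σ₁ - 1) + σ₁ ^ 2 / σ₂ ^ 2 - 1
      = (σ₁ - σ₂) ^ 2 * (σ₁ + 2 * σ₂) / (σ₁ * σ₂ ^ 2) := by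
    field_simp
    ring
  have hnum : (σ₁ - σ₂) ^ 2 * (σ₁ + 2 * σ₂) ≤ 6 * ε * σ₁ * σ₂ := by
    have hε₀ : 0 ≤ ε := by linarith
    have hsq : (σ₁ - σ₂) ^ 2 ≤ ε * (σ₂ / 2) := by nlinarith
    have hσ₂σ₁ : σ₂ ≤ 2 * σ₁ := by linarith
    nlinarith [mul_le_mul_of_nonneg_right hsq (by positivity : 0 ≤ σ₁ + 2 * σ₂),
      mul_le_mul_of_nonneg_left hσ₂σ₁ (mul_nonneg hε₀ hσ₂.le)]
  have hbound : (σ₁ - σ₂) ^ 2 * (σ₁ + 2 * σ₂) / (σ₁ * σ₂ ^ 2) ≤ 2 * (3 * ε / σ₂) := by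
    rw [div_le_iff₀ (by positivity)]
    calc _ ≤ 6 * ε * σ₁ * σ₂ := hnum
      _ = _ := by field_simp; ring
  linarith

theorem klDiv_centered_gaussians_le_general (σ₁ σ₂ ε : ℝ) (h₂ : 0 < σ₂)
    (hε : ε ≤ σ₂ / 2) (hlo : σ₂ - ε ≤ σ₁) (hhi : σ₁ ≤ σ₂ + ε) :
    ∫ x, llr (gaussianReal 0 (Real.toNNReal (σ₁ ^ 2)))
          (gaussianReal 0 (Real.toNNReal (σ₂ ^ 2))) x
        ∂(gaussianReal 0 (Real.toNNReal (σ₁ ^ 2))) ≤ 3 * ε / σ₂ := by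
  have h₁ : 0 < σ₁ := by linarith
  have hv₁ : (σ₁ ^ 2).toNNReal ≠ 0 := by simp [h₁.ne']
  have hv₂ : (σ₂ ^ 2).toNNReal ≠ 0 := by simp [h₂.ne']
  rw [integral_llr_gaussianReal 0 0 hv₁ hv₂, Real.coe_toNNReal _ (sq_nonneg σ₁),
    Real.coe_toNNReal _ (sq_nonneg σ₂), sub_zero, zero_pow two_ne_zero, add_zero]
  exact log_sq_div_sq_add_sq_div_sq_sub_one_le h₂ hε hlo hhi

/-- Quantitative form of Proposition 2: if `σ₂ − ε ≤ σ₁ ≤ σ₂ + ε` with `0 ≤ ε ≤ σ₂/2`, then the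
Kullback–Leibler divergence `∫ log(dp₁/dp₂) dp₁` between `p₁ = N(0,σ₁²)` and `p₂ = N(0,σ₂²)`
is at most `3ε/σ₂`. -/
theorem klDiv_centered_gaussians_le (σ₁ σ₂ ε : ℝ) (h₂ : 0 < σ₂)
    (hε0 : 0 ≤ ε) (hε : ε ≤ σ₂ / 2) (hlo : σ₂ - ε ≤ σ₁) (hhi : σ₁ ≤ σ₂ + ε) :
    ∫ x, llr (gaussianReal 0 (Real.toNNReal (σ₁ ^ 2)))
          (gaussianReal 0 (Real.toNNReal (σ₂ ^ 2))) x
        ∂(gaussianReal 0 (Real.toNNReal (σ₁ ^ 2))) ≤ 3 * ε / σ₂ :=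
  klDiv_centered_gaussians_le_general σ₁ σ₂ ε h₂ hε hlo hhi
end
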